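/- arXiv:1108.4920 — 2 statements merged into one kernel-verified Lean document; each statement's English description precedes it below -/
import Mathlib

section
/- (Cyclic expansion of the α-permanent.) Let A be an (n+1)×(n+1) matrix indexed by {0,1,…,n}. Then per_α(A) = Σ_{k=1}^{n+1} α Σ_{(i_1,…,i_{k-1})} A_{0,i_1} A_{i_1,i_2} ⋯ A_{i_{k-1},0} · per_α(A restricted to {1,…,n}∖{i_1,…,i_{k-1}}), where the inner sum is over all ordered tuples of distinct indices i_1,…,i_{k-1} ∈ {1,…,n} (the k = 1 term being α A_{0,0} per_α(A restricted to {1,…,n})), and per_α of the empty (0×0) matrix is 1. -/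
open Finset

/-- Number of cycles of a permutation, counting fixed points as 1-cycles. -/
noncomputable def numCycles {ι : Type*} [Fintype ι] [DecidableEq ι] (σ : Equiv.Perm ι) : ℕ :=
  σ.cycleType.card + (Finset.univ.filter fun i => σ i = i).card

/-- The α-permanent of a matrix. -/
noncomputable def perA {ι : Type*} [Fintype ι] [DecidableEq ι] (α : ℝ) (A : Matrix ι ι ℝ) : ℝ :=
  ∑ σ : Equiv.Perm ι, α ^ numCycles σ * ∏ i, A i (σ i)

/-- The sum of cyclic products: sum over single-cycle permutations. -/
noncomputable def cyp {ι : Type*} [Fintype ι] [DecidableEq ι] (A : Matrix ι ι ℝ) : ℝ :=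
  ∑ σ ∈ Finset.univ.filter (fun σ : Equiv.Perm ι => numCycles σ = 1), ∏ i, A i (σ i)

/-- The cycle through index 0 determined by a tuple of distinct indices:
`path f = (0, (f 0).succ, …, (f (m-1)).succ)`, traversed cyclically. -/
def path {n m : ℕ} (f : Fin m ↪ Fin n) : Fin (m + 1) → Fin (n + 1) :=
  Fin.cons 0 (fun j => (f j).succ)

section Aux
variable {n m : ℕ}

lemma path_zero' (f : Fin m ↪ Fin n) : path f 0 = 0 := rfl
lemma path_succ' (f : Fin m ↪ Fin n) (j : Fin m) : path f j.succ = (f j).succ := rfl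

lemma path_injective (f : Fin m ↪ Fin n) : Function.Injective (path f) := by
  intro a b h
  induction a using Fin.cases <;> induction b using Fin.cases <;>
    simp_all [path, Fin.succ_ne_zero, (Fin.succ_ne_zero _).symm, Fin.succ_inj]

/-- The path as an embedding. -/
def pathEmb (f : Fin m ↪ Fin n) : Fin (m + 1) ↪ Fin (n + 1) := ⟨path f, path_injective f⟩

/-- The embedding of the complement of the path into `Fin (n+1)`. -/
def compEmb (f : Fin m ↪ Fin n) : {i : Fin n // ∀ j, f j ≠ i} ↪ Fin (n + 1) :=
  ⟨fun i => i.1.succ, fun _ _ h => Subtype.ext (Fin.succ_inj.mp h)⟩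

lemma not_mem_range_compEmb {f : Fin m ↪ Fin n} {x : Fin (n+1)}
    (hx : x ∈ Set.range (pathEmb f)) : x ∉ Set.range (compEmb f) := by
  rintro ⟨i, rfl⟩
  obtain ⟨j, hj⟩ := hx
  induction j using Fin.cases with
  | zero => exact (Fin.succ_ne_zero _) hj.symm
  | succ j => exact i.2 j (Fin.succ_inj.mp hj)

lemma mem_range_or {f : Fin m ↪ Fin n} (x : Fin (n+1)) :
    x ∈ Set.range (pathEmb f) ∨ x ∈ Set.range (compEmb f) := by
  induction x using Fin.cases with
  | zero => exact Or.inl ⟨0, rfl⟩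
  | succ y =>
    by_cases hy : ∃ j, f j = y
    · obtain ⟨j, rfl⟩ := hy; exact Or.inl ⟨j.succ, rfl⟩
    · exact Or.inr ⟨⟨y, fun j h => hy ⟨j, h⟩⟩, rfl⟩

/-- The cyclic permutation through `0` along the path. -/
noncomputable def cycPerm (f : Fin m ↪ Fin n) : Equiv.Perm (Fin (n+1)) :=
  (finRotate (m+1)).viaFintypeEmbedding (pathEmb f)

/-- The extension of a permutation of the complement. -/
noncomputable def extPerm (f : Fin m ↪ Fin n)
    (τ : Equiv.Perm {i : Fin n // ∀ j, f j ≠ i}) : Equiv.Perm (Fin (n+1)) :=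
  τ.viaFintypeEmbedding (compEmb f)

/-- The permutation assembled from the cycle through `0` and a permutation of the rest. -/
noncomputable def Φ (f : Fin m ↪ Fin n)
    (τ : Equiv.Perm {i : Fin n // ∀ j, f j ≠ i}) : Equiv.Perm (Fin (n+1)) :=
  cycPerm f * extPerm f τ

lemma Φ_path (f : Fin m ↪ Fin n) (τ : Equiv.Perm {i : Fin n // ∀ j, f j ≠ i})
    (j : Fin (m+1)) : Φ f τ (path f j) = path f (j + 1) := by
  have h1 : extPerm f τ (path f j) = path f j :=
    Equiv.Perm.viaFintypeEmbedding_apply_notMem_range _ _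
      (not_mem_range_compEmb ⟨j, rfl⟩)
  have h2 : cycPerm f (pathEmb f j) = pathEmb f ((finRotate (m+1)) j) :=
    Equiv.Perm.viaFintypeEmbedding_apply_image _ _ _
  simp only [Φ, Equiv.Perm.mul_apply, h1]
  simpa [pathEmb] using h2

lemma Φ_comp (f : Fin m ↪ Fin n) (τ : Equiv.Perm {i : Fin n // ∀ j, f j ≠ i})
    (i : {i : Fin n // ∀ j, f j ≠ i}) : Φ f τ (compEmb f i) = compEmb f (τ i) := by
  have h1 : extPerm f τ (compEmb f i) = compEmb f (τ i) :=
    Equiv.Perm.viaFintypeEmbedding_apply_image _ _ _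
  have h2 : cycPerm f (compEmb f (τ i)) = compEmb f (τ i) :=
    Equiv.Perm.viaFintypeEmbedding_apply_notMem_range _ _
      (fun hm => not_mem_range_compEmb hm (Set.mem_range_self _))
  simp only [Φ, Equiv.Perm.mul_apply, h1, h2]

lemma disjoint_cyc_ext (f : Fin m ↪ Fin n) (τ : Equiv.Perm {i : Fin n // ∀ j, f j ≠ i}) :
    Equiv.Perm.Disjoint (cycPerm f) (extPerm f τ) := by
  intro x
  rcases mem_range_or (f := f) x with hx | hx
  · exact Or.inr (Equiv.Perm.viaFintypeEmbedding_apply_notMem_range _ _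
      (not_mem_range_compEmb hx))
  · refine Or.inl (Equiv.Perm.viaFintypeEmbedding_apply_notMem_range _ _ ?_)
    exact fun hm => not_mem_range_compEmb hm hx

lemma numCycles_eq {ι : Type*} [Fintype ι] [DecidableEq ι] (σ : Equiv.Perm ι) :
    numCycles σ = σ.cycleType.card + (Fintype.card ι - σ.support.card) := by
  have h1 : σ.support = Finset.univ.filter fun i => σ i ≠ i := rfl
  have h2 := Finset.card_filter_add_card_filter_not
    (s := (Finset.univ : Finset ι)) (p := fun i => σ i = i)
  have h3 : σ.support.card ≤ Fintype.card ι := Finset.card_le_univ _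
  have h4 : (Finset.univ : Finset ι).card = Fintype.card ι := rfl
  unfold numCycles
  rw [h1] at h3 ⊢
  simp only [ne_eq] at *
  omega

lemma card_compSubtype (f : Fin m ↪ Fin n) :
    Fintype.card {i : Fin n // ∀ j, f j ≠ i} = n - m := by
  classical
  rw [Fintype.card_subtype]
  have h : (univ.filter fun i : Fin n => ∀ j, f j ≠ i) = univ \ univ.image f := by
    ext i
    simp [eq_comm]
  rw [h, Finset.card_sdiff_of_subset (Finset.subset_univ _),
    Finset.card_image_of_injective _ f.injective]
  simp

lemma numCycles_Φ (f : Fin m ↪ Fin n) (τ : Equiv.Perm {i : Fin n // ∀ j, f j ≠ i}) :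
    numCycles (Φ f τ) = numCycles τ + 1 := by
  classical
  have hd := disjoint_cyc_ext f τ
  have hmn : m ≤ n := by
    simpa using Fintype.card_le_of_embedding f
  have hct : (Φ f τ).cycleType = (cycPerm f).cycleType + (extPerm f τ).cycleType :=
    hd.cycleType_mul
  have hsupp : (Φ f τ).support.card = (cycPerm f).support.card + (extPerm f τ).support.card :=
    hd.card_support_mul
  have hext_ct : (extPerm f τ).cycleType = τ.cycleType :=
    Equiv.Perm.cycleType_extendDomain _
  have hext_supp : (extPerm f τ).support.card = τ.support.card :=
    Equiv.Perm.card_support_extend_domain _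
  have hτ_supp_le : τ.support.card ≤ n - m := by
    rw [← card_compSubtype f]; exact Finset.card_le_univ _
  rw [numCycles_eq, numCycles_eq, hct, hsupp, hext_ct, hext_supp, Fintype.card_fin,
    card_compSubtype f]
  rcases m with _ | k
  · have h1 : cycPerm f = 1 := by
      unfold cycPerm
      rw [finRotate_one, show (Equiv.refl (Fin 1)) = 1 from rfl]
      exact Equiv.Perm.extendDomain_one _
    rw [h1]
    simp only [Equiv.Perm.cycleType_one, Equiv.Perm.support_one, Multiset.card_zero,
      Finset.card_empty, Multiset.card_add]
    omega
  · have h1 : (cycPerm f).cycleType = {k + 2} := by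
      unfold cycPerm
      rw [Equiv.Perm.viaFintypeEmbedding, Equiv.Perm.cycleType_extendDomain,
        cycleType_finRotate]
    have h2 : (cycPerm f).support.card = k + 2 := by
      unfold cycPerm
      rw [Equiv.Perm.viaFintypeEmbedding, Equiv.Perm.card_support_extend_domain,
        support_finRotate]
      simp
    rw [h1, h2]
    simp only [Multiset.card_add, Multiset.card_singleton]
    omega

lemma prod_Φ (f : Fin m ↪ Fin n) (τ : Equiv.Perm {i : Fin n // ∀ j, f j ≠ i})
    (A : Matrix (Fin (n + 1)) (Fin (n + 1)) ℝ) :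
    ∏ x, A x (Φ f τ x) =
      (∏ j : Fin (m + 1), A (path f j) (path f (j + 1))) *
        ∏ i : {i : Fin n // ∀ j, f j ≠ i}, A (compEmb f i) (compEmb f (τ i)) := by
  classical
  have hdisj : Disjoint (univ.map (pathEmb f)) (univ.map (compEmb f)) := by
    rw [Finset.disjoint_left]
    rintro x hx hx'
    simp only [Finset.mem_map, Finset.mem_univ, true_and] at hx hx'
    obtain ⟨j, rfl⟩ := hx
    obtain ⟨i, hi⟩ := hx'
    exact not_mem_range_compEmb ⟨j, rfl⟩ ⟨i, hi⟩
  have hcover : univ.map (pathEmb f) ∪ univ.map (compEmb f) = univ := by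
    apply Finset.eq_univ_of_forall
    intro x
    rcases mem_range_or (f := f) x with ⟨j, hj⟩ | ⟨i, hi⟩
    · exact Finset.mem_union_left _ (Finset.mem_map.mpr ⟨j, Finset.mem_univ _, hj⟩)
    · exact Finset.mem_union_right _ (Finset.mem_map.mpr ⟨i, Finset.mem_univ _, hi⟩)
  rw [← hcover, Finset.prod_union hdisj, Finset.prod_map, Finset.prod_map]
  congr 1
  · exact Finset.prod_congr rfl fun j _ => by
      rw [show (pathEmb f) j = path f j from rfl, Φ_path]
  · exact Finset.prod_congr rfl fun i _ => by rw [Φ_comp]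

open Fin.NatCast in
lemma iterate_Φ (f : Fin m ↪ Fin n) (τ : Equiv.Perm {i : Fin n // ∀ j, f j ≠ i}) :
    ∀ k : ℕ, ((Φ f τ) ^ k) 0 = path f (k : Fin (m + 1)) := by
  intro k
  induction k with
  | zero => simp [path_zero']
  | succ k ih =>
    rw [pow_succ', Equiv.Perm.mul_apply, ih, Φ_path]
    congr 1
    push_cast
    ring

end Aux


/-- The map assembling the permutation from the cycle data. -/
noncomputable def Ψ {n : ℕ}
    (x : Σ m : Fin (n + 1), Σ f : Fin (m : ℕ) ↪ Fin n,
      Equiv.Perm {i : Fin n // ∀ j, f j ≠ i}) :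
    Equiv.Perm (Fin (n + 1)) := Φ x.2.1 x.2.2

open Fin.NatCast in
lemma path_eq_lt_false {n m m' : ℕ} (f : Fin m ↪ Fin n) (f' : Fin m' ↪ Fin n)
    (hp : ∀ k : ℕ, path f (k : Fin (m + 1)) = path f' (k : Fin (m' + 1)))
    (hlt : m < m') : False := by
  have h := hp (m + 1)
  have h0 : ((m + 1 : ℕ) : Fin (m + 1)) = 0 := Fin.natCast_self (m + 1)
  have h1 : ((m + 1 : ℕ) : Fin (m' + 1)) = (⟨m, hlt⟩ : Fin m').succ := by
    apply Fin.ext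
    rw [Fin.val_natCast, Nat.mod_eq_of_lt (by omega : m + 1 < m' + 1)]
    rfl
  rw [h0, h1, path_zero', path_succ'] at h
  exact (Fin.succ_ne_zero _) h.symm

open Fin.NatCast in
lemma Ψ_injective {n : ℕ} : Function.Injective (Ψ (n := n)) := by
  rintro ⟨m, f, τ⟩ ⟨m', f', τ'⟩ h
  simp only [Ψ] at h
  have hp : ∀ k : ℕ, path f (k : Fin ((m : ℕ) + 1)) = path f' (k : Fin ((m' : ℕ) + 1)) := by
    intro k
    rw [← iterate_Φ f τ k, ← iterate_Φ f' τ' k, h]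
  have hmm : (m : ℕ) = (m' : ℕ) := by
    rcases lt_trichotomy (m : ℕ) (m' : ℕ) with hlt | he | hlt
    · exact absurd (path_eq_lt_false f f' hp hlt) (by simp)
    · exact he
    · exact absurd (path_eq_lt_false f' f (fun k => (hp k).symm) hlt) (by simp)
  obtain rfl : m = m' := Fin.ext hmm
  have hf : f = f' := by
    ext j
    have h2 := hp ((j : ℕ) + 1)
    have hc : (((j : ℕ) + 1 : ℕ) : Fin ((m : ℕ) + 1)) = j.succ := by
      apply Fin.ext
      rw [Fin.val_natCast, Nat.mod_eq_of_lt (by omega : (j : ℕ) + 1 < (m : ℕ) + 1)]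
      rfl
    rw [hc, path_succ', path_succ'] at h2
    exact congrArg Fin.val (Fin.succ_inj.mp h2)
  subst hf
  have hτ : τ = τ' := by
    apply Equiv.ext
    intro i
    have h3 : Φ f τ (compEmb f i) = Φ f τ' (compEmb f i) := by rw [h]
    rw [Φ_comp, Φ_comp] at h3
    exact (compEmb f).injective h3
  rw [hτ]

lemma card_Sig (n : ℕ) :
    Fintype.card (Σ m : Fin (n + 1), Σ f : Fin (m : ℕ) ↪ Fin n,
        Equiv.Perm {i : Fin n // ∀ j, f j ≠ i})
      = Fintype.card (Equiv.Perm (Fin (n + 1))) := by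
  classical
  rw [Fintype.card_sigma, Fintype.card_perm, Fintype.card_fin]
  have h2 : ∀ m : Fin (n + 1),
      Fintype.card (Σ f : Fin (m : ℕ) ↪ Fin n,
        Equiv.Perm {i : Fin n // ∀ j, f j ≠ i}) = Nat.factorial n := by
    intro m
    have hm : (m : ℕ) ≤ n := by omega
    rw [Fintype.card_sigma]
    calc ∑ f : Fin (m : ℕ) ↪ Fin n,
        Fintype.card (Equiv.Perm {i : Fin n // ∀ j, f j ≠ i})
        = ∑ _f : Fin (m : ℕ) ↪ Fin n, Nat.factorial (n - (m : ℕ)) :=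
          Finset.sum_congr rfl fun f _ => by
            rw [Fintype.card_perm, card_compSubtype]
      _ = (n.descFactorial (m : ℕ)) * Nat.factorial (n - (m : ℕ)) := by
          rw [Finset.sum_const, Finset.card_univ, Fintype.card_embedding_eq,
            Fintype.card_fin, Fintype.card_fin, smul_eq_mul]
      _ = Nat.factorial n := by
          rw [mul_comm]
          exact Nat.factorial_mul_descFactorial hm
  rw [Finset.sum_congr rfl fun m _ => h2 m, Finset.sum_const, Finset.card_univ,
    Fintype.card_fin, smul_eq_mul, Nat.factorial_succ]

theorem perA_cyclic_expansion {n : ℕ} (α : ℝ) (A : Matrix (Fin (n + 1)) (Fin (n + 1)) ℝ) :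
    perA α A =
      ∑ m ∈ Finset.range (n + 1), α *
        ∑ f : Fin m ↪ Fin n,
          (∏ j : Fin (m + 1), A (path f j) (path f (j + 1))) *
            perA α (A.submatrix
              (fun i : {i : Fin n // ∀ j, f j ≠ i} => i.1.succ)
              (fun i : {i : Fin n // ∀ j, f j ≠ i} => i.1.succ)) := by
  classical
  have hbij : Function.Bijective (Ψ (n := n)) :=
    (Fintype.bijective_iff_injective_and_card _).mpr ⟨Ψ_injective, card_Sig n⟩
  have key := Fintype.sum_bijective (Ψ (n := n)) hbij
    (fun x => α ^ numCycles (Ψ x) * ∏ i, A i (Ψ x i))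
    (fun σ => α ^ numCycles σ * ∏ i, A i (σ i)) (fun x => rfl)
  rw [perA, ← key, ← Fin.sum_univ_eq_sum_range (fun m => α * ∑ f : Fin m ↪ Fin n,
      (∏ j : Fin (m + 1), A (path f j) (path f (j + 1))) *
        perA α (A.submatrix (fun i : {i : Fin n // ∀ j, f j ≠ i} => i.1.succ)
          (fun i : {i : Fin n // ∀ j, f j ≠ i} => i.1.succ))) (n + 1),
    ← Finset.univ_sigma_univ, Finset.sum_sigma]
  apply Finset.sum_congr rfl
  intro m _
  rw [← Finset.univ_sigma_univ, Finset.sum_sigma, Finset.mul_sum]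
  apply Finset.sum_congr rfl
  intro f _
  have hper : perA α (A.submatrix (fun i : {i : Fin n // ∀ j, f j ≠ i} => i.1.succ)
      (fun i : {i : Fin n // ∀ j, f j ≠ i} => i.1.succ))
      = ∑ τ : Equiv.Perm {i : Fin n // ∀ j, f j ≠ i},
          α ^ numCycles τ * ∏ i, A (compEmb f i) (compEmb f (τ i)) := by
    rw [perA]
    apply Finset.sum_congr rfl
    intro τ _
    congr 1
  rw [hper, Finset.mul_sum, Finset.mul_sum]
  apply Finset.sum_congr rfl
  intro τ _
  show α ^ numCycles (Φ f τ) * ∏ i, A i (Φ f τ i) = _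
  rw [numCycles_Φ, prod_Φ, pow_succ]
  ring
end

section
/- Let K be an (n+1)×(n+1) symmetric matrix indexed by {t, x_1, …, x_n}, n ≥ 2, with K(x_i,x_j) = c for all 1 ≤ i,j ≤ n, where c ≠ 0, and α > 0 with α + n − 1 ≠ 0. Then per_α(K)/per_α(K restricted to {x_1,…,x_n}) = α K(t,t) + α Σ_i K(t,x_i)²/(c(α+n−1)) + Σ_{i≠j} K(t,x_i)K(t,x_j)/(c(α+n−1)). -/
open Finset

open Equiv Equiv.Perm

section Aux

variable {ι : Type*} [Fintype ι] [DecidableEq ι]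

lemma numCycles_conj (g σ : Perm ι) : numCycles (g * σ * g⁻¹) = numCycles σ := by
  unfold numCycles
  rw [cycleType_conj]
  congr 1
  apply Finset.card_bij' (i := fun a _ => g⁻¹ a) (j := fun a _ => g a)
  · intro a ha
    simp only [mem_filter, mem_univ, true_and, mul_apply] at ha ⊢
    have := congrArg (g⁻¹ : Perm ι) ha
    simpa using this
  · intro a ha
    simp only [mem_filter, mem_univ, true_and, mul_apply] at ha ⊢
    simp [ha]
  · intro a _; simp
  · intro a _; simp

lemma numCycles_inv (σ : Perm ι) : numCycles σ⁻¹ = numCycles σ := by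
  unfold numCycles
  rw [cycleType_inv]
  congr 2
  ext a
  simp only [mem_filter, mem_univ, true_and]
  constructor
  · intro h; have := congrArg σ h; simpa using this.symm
  · intro h; have := congrArg (σ⁻¹ : Perm ι) h; simpa using this.symm

lemma isCycle_splice {c : Perm ι} (hc : c.IsCycle) {x p : ι} (hx : c x = x) (hp : c p ≠ p) :
    (swap x p * c).IsCycle := by
  classical
  have hpx : p ≠ x := fun h => hp (by rw [h]; exact hx)
  set f := swap x p * c with hf
  have hfx : f x = p := by simp [hf, mul_apply, hx]
  have key : ∀ y, f y ≠ y → f.SameCycle y x := by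
    intro y hy
    rcases eq_or_ne y x with rfl | hyx
    · exact SameCycle.refl _ _
    have hcy : c y ≠ y := by
      intro h
      apply hy
      have hyp : y ≠ p := fun h' => hp (h' ▸ h)
      simp [hf, mul_apply, h, swap_apply_of_ne_of_ne hyx hyp]
    obtain ⟨k0, hk0pos, -, hk0⟩ := (hc.sameCycle hcy hp).exists_pow_eq c
    have hex : ∃ k, 0 < k ∧ (c ^ k) y = p := ⟨k0, hk0pos, hk0⟩
    set k := Nat.find hex with hkdef
    obtain ⟨hkpos, hk⟩ := Nat.find_spec hex
    have claim : ∀ j, j < k → (f ^ j) y = (c ^ j) y := by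
      intro j
      induction j with
      | zero => simp
      | succ m ih =>
        intro hm
        have h1 : (f ^ m) y = (c ^ m) y := ih (lt_trans (Nat.lt_succ_self m) hm)
        have hzx : (c ^ m) y ≠ x := by
          intro h
          exact hyx ((c ^ m).injective
            (h.trans (pow_apply_eq_self_of_apply_eq_self hx m).symm))
        have hcz : c ((c ^ m) y) ≠ x := by
          intro h
          exact hzx (c.injective (h.trans hx.symm))
        have hczp : c ((c ^ m) y) ≠ p := by
          intro h
          have h' : (c ^ (m + 1)) y = p := by rw [pow_succ', mul_apply]; exact h
          exact Nat.find_min hex hm ⟨Nat.succ_pos m, h'⟩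
        rw [pow_succ', pow_succ', mul_apply, mul_apply, h1]
        simp only [mul_apply]
        exact swap_apply_of_ne_of_ne hcz hczp
    have hfk : (f ^ k) y = x := by
      have h1 : (f ^ (k - 1)) y = (c ^ (k - 1)) y := claim _ (Nat.sub_lt hkpos one_pos)
      have h2 : c ((c ^ (k - 1)) y) = p := by
        rw [← mul_apply, ← pow_succ', Nat.sub_add_cancel hkpos, hk]
      calc (f ^ k) y = f ((f ^ (k - 1)) y) := by
              rw [← mul_apply, ← pow_succ', Nat.sub_add_cancel hkpos]
        _ = x := by rw [h1, hf, mul_apply, h2, swap_apply_right]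
    exact ⟨(k : ℤ), by simpa using hfk⟩
  exact ⟨x, by rw [hfx]; exact hpx, fun y hy => (key y hy).symm⟩


lemma numCycles_swap_mul {τ : Perm ι} {x p : ι} (hx : τ x = x) (hpx : p ≠ x) :
    numCycles (swap x p * τ) + 1 = numCycles τ := by
  classical
  set σ := swap x p * τ with hσ
  have hσx : σ x = p := by rw [hσ, mul_apply, hx, swap_apply_left]
  by_cases hp : τ p = p
  · -- disjoint case
    have hd : (swap x p).Disjoint τ := by
      intro a
      rcases eq_or_ne a x with rfl | hax
      · exact Or.inr hx
      rcases eq_or_ne a p with rfl | hap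
      · exact Or.inr hp
      · exact Or.inl (swap_apply_of_ne_of_ne hax hap)
    have hct : Multiset.card σ.cycleType = 1 + Multiset.card τ.cycleType := by
      rw [hσ, hd.cycleType_mul, Multiset.card_add, (isCycle_swap (Ne.symm hpx)).cycleType]
      simp
    have hσp : σ p = x := by rw [hσ, mul_apply, hp, swap_apply_right]
    have hfix : (univ.filter fun i => τ i = i)
        = insert x (insert p (univ.filter fun i => σ i = i)) := by
      ext a
      simp only [mem_filter, mem_univ, true_and, mem_insert]
      constructor
      · intro h
        by_cases hax : a = x
        · exact Or.inl hax
        by_cases hap : a = p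
        · exact Or.inr (Or.inl hap)
        · exact Or.inr (Or.inr (by rw [hσ, mul_apply, h, swap_apply_of_ne_of_ne hax hap]))
      · rintro (hax | hap | h)
        · rw [hax]; exact hx
        · rw [hap]; exact hp
        · by_cases hax : a = x
          · rw [hax] at h ⊢; rw [hσx] at h; exact absurd h hpx
          by_cases hap : a = p
          · rw [hap] at h; rw [hσp] at h; exact absurd h.symm hpx
          · rw [hσ, mul_apply] at h
            have h2 := congrArg (swap x p) h
            rw [swap_apply_self, swap_apply_of_ne_of_ne hax hap] at h2
            exact h2
    have hxni : x ∉ insert p (univ.filter fun i => σ i = i) := by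
      simp only [mem_insert, mem_filter, mem_univ, true_and]
      push_neg
      exact ⟨Ne.symm hpx, by rw [hσx]; exact hpx⟩
    have hpni : p ∉ (univ.filter fun i => σ i = i) := by
      simp only [mem_filter, mem_univ, true_and]
      rw [hσp]; exact Ne.symm hpx
    have hcard : (univ.filter fun i => τ i = i).card
        = (univ.filter fun i => σ i = i).card + 2 := by
      rw [hfix, Finset.card_insert_of_notMem hxni, Finset.card_insert_of_notMem hpni]
    unfold numCycles
    omega
  · -- merge case
    set c := τ.cycleOf p with hc
    have hccyc : c.IsCycle := isCycle_cycleOf τ hp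
    have hsc : ∀ a, τ.SameCycle p a → c a = τ a := fun a ha => by
      rw [hc, cycleOf_apply, if_pos ha]
    have hnsc : ∀ a, ¬ τ.SameCycle p a → c a = a := fun a ha =>
      cycleOf_apply_of_not_sameCycle ha
    have hxnsc : ¬ τ.SameCycle p x := by
      intro h
      obtain ⟨i, hi⟩ := h.symm
      rw [zpow_apply_eq_self_of_apply_eq_self hx i] at hi
      exact hpx hi.symm
    have hcx : c x = x := hnsc x hxnsc
    have hcp : c p ≠ p := by rw [hsc p (SameCycle.refl τ p)]; exact hp
    set d := c⁻¹ * τ with hd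
    have hτcd : τ = c * d := by rw [hd, mul_inv_cancel_left]
    have hdfix : ∀ a, τ.SameCycle p a → d a = a := by
      intro a ha
      rw [hd, mul_apply, ← hsc a ha, Equiv.Perm.coe_inv, Equiv.symm_apply_apply]
    have hdmove : ∀ a, ¬ τ.SameCycle p a → d a = τ a := by
      intro a ha
      have h2 : ¬ τ.SameCycle p (τ a) := fun h => ha (by rwa [sameCycle_apply_right] at h)
      rw [hd, mul_apply]
      have h3 := hnsc _ h2
      calc c⁻¹ (τ a) = c⁻¹ (c (τ a)) := by rw [h3]
        _ = τ a := Equiv.symm_apply_apply c (τ a)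
    have hcdisj : c.Disjoint d := by
      intro a
      by_cases h : τ.SameCycle p a
      · exact Or.inr (hdfix a h)
      · exact Or.inl (hnsc a h)
    set c' := swap x p * c with hc'
    have hc'cyc : c'.IsCycle := isCycle_splice hccyc hcx hcp
    have hσ2 : σ = c' * d := by rw [hσ, hτcd, hc', mul_assoc]
    have hc'disj : c'.Disjoint d := by
      intro a
      by_cases h : τ.SameCycle p a
      · exact Or.inr (hdfix a h)
      · by_cases hax : a = x
        · exact Or.inr (by rw [hax, hdmove x hxnsc, hx])
        · have hap : a ≠ p := fun h' => h (h' ▸ SameCycle.refl τ p)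
          exact Or.inl (by rw [hc', mul_apply, hnsc a h, swap_apply_of_ne_of_ne hax hap])
    have hct : Multiset.card σ.cycleType = Multiset.card τ.cycleType := by
      rw [hσ2, hc'disj.cycleType_mul, hτcd, hcdisj.cycleType_mul, Multiset.card_add,
        Multiset.card_add, hc'cyc.cycleType, hccyc.cycleType]
      simp
    have hfix : (univ.filter fun i => τ i = i)
        = insert x (univ.filter fun i => σ i = i) := by
      ext a
      simp only [mem_filter, mem_univ, true_and, mem_insert]
      constructor
      · intro h
        by_cases hax : a = x
        · exact Or.inl hax
        · have hap : a ≠ p := fun h' => hp (h' ▸ h)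
          exact Or.inr (by rw [hσ, mul_apply, h, swap_apply_of_ne_of_ne hax hap])
      · rintro (hax | h)
        · rw [hax]; exact hx
        · by_cases hax : a = x
          · rw [hax] at h ⊢; rw [hσx] at h; exact absurd h hpx
          by_cases hap : a = p
          · rw [hap] at h; rw [hσ, mul_apply] at h
            have h2 := congrArg (swap x p) h
            rw [swap_apply_self, swap_apply_right] at h2
            exact absurd (τ.injective (h2.trans hx.symm)) hpx
          · rw [hσ, mul_apply] at h
            have h2 := congrArg (swap x p) h
            rw [swap_apply_self, swap_apply_of_ne_of_ne hax hap] at h2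
            exact h2
    have hxni : x ∉ (univ.filter fun i => σ i = i) := by
      simp only [mem_filter, mem_univ, true_and]
      rw [hσx]; exact hpx
    have hcard : (univ.filter fun i => τ i = i).card
        = (univ.filter fun i => σ i = i).card + 1 := by
      rw [hfix, Finset.card_insert_of_notMem hxni]
    unfold numCycles
    omega


end Aux

section FinAux

lemma numCycles_decomposeFin_zero {m : ℕ} (e : Perm (Fin m)) :
    numCycles (Equiv.Perm.decomposeFin.symm (0, e)) = numCycles e + 1 := by
  classical
  let ε : Fin m ≃ {x : Fin (m + 1) // x ≠ 0} :=
    { toFun := fun i => ⟨i.succ, Fin.succ_ne_zero i⟩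
      invFun := fun x => x.1.pred x.2
      left_inv := fun i => by simp
      right_inv := fun x => by simp }
  have hE : (Equiv.Perm.decomposeFin.symm (0, e) : Perm (Fin (m + 1)))
      = e.extendDomain ε := by
    ext a
    refine Fin.cases ?_ ?_ a
    · rw [Equiv.Perm.decomposeFin_symm_apply_zero,
        Equiv.Perm.extendDomain_apply_not_subtype]
      simp
    · intro i
      rw [Equiv.Perm.decomposeFin_symm_apply_succ,
        Equiv.Perm.extendDomain_apply_subtype (b := i.succ) (h := Fin.succ_ne_zero i)]
      simp [ε]
  rw [hE]
  unfold numCycles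
  rw [Equiv.Perm.cycleType_extendDomain]
  have hfix : (univ.filter fun a : Fin (m + 1) => e.extendDomain ε a = a)
      = insert 0 ((univ.filter fun i => e i = i).image Fin.succ) := by
    ext a
    simp only [mem_filter, mem_univ, true_and, mem_insert, mem_image]
    refine Fin.cases ?_ ?_ a
    · simp only [eq_self_iff_true, true_or, iff_true]
      rw [Equiv.Perm.extendDomain_apply_not_subtype]
      simp
    · intro i
      rw [Equiv.Perm.extendDomain_apply_subtype (b := i.succ) (h := Fin.succ_ne_zero i)]
      constructor
      · intro h
        exact Or.inr ⟨i, Fin.succ_injective _ (by simpa [ε] using h), rfl⟩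
      · rintro (h | ⟨j, hj, hj2⟩)
        · exact absurd h (Fin.succ_ne_zero i)
        · have : j = i := Fin.succ_injective _ hj2
          subst this
          simp [ε, hj]
  rw [hfix, Finset.card_insert_of_notMem (by simp [Fin.succ_ne_zero, eq_comm]),
    Finset.card_image_of_injective _ (Fin.succ_injective _)]
  omega

lemma decomposeFin_symm_eq {m : ℕ} (p : Fin (m + 1)) (e : Perm (Fin m)) :
    Equiv.Perm.decomposeFin.symm (p, e)
      = swap 0 p * Equiv.Perm.decomposeFin.symm (0, e) := by
  ext a
  refine Fin.cases ?_ ?_ a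
  · rw [Equiv.Perm.decomposeFin_symm_apply_zero, mul_apply,
      Equiv.Perm.decomposeFin_symm_apply_zero, swap_apply_left]
  · intro i
    rw [Equiv.Perm.decomposeFin_symm_apply_succ, mul_apply,
      Equiv.Perm.decomposeFin_symm_apply_succ]
    simp

lemma numCycles_decomposeFin_succ {m : ℕ} (q : Fin m) (e : Perm (Fin m)) :
    numCycles (Equiv.Perm.decomposeFin.symm (q.succ, e)) = numCycles e := by
  have h0 : (Equiv.Perm.decomposeFin.symm (0, e) : Perm (Fin (m + 1))) 0 = 0 :=
    Equiv.Perm.decomposeFin_symm_apply_zero _ _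
  have hkey := numCycles_swap_mul (τ := Equiv.Perm.decomposeFin.symm (0, e))
    (x := 0) (p := q.succ) h0 (Fin.succ_ne_zero q)
  rw [numCycles_decomposeFin_zero] at hkey
  rw [decomposeFin_symm_eq]
  omega

end FinAux

section Sums

noncomputable def Fc (α : ℝ) (m : ℕ) : ℝ := ∑ σ : Equiv.Perm (Fin m), α ^ numCycles σ

lemma Fc_zero (α : ℝ) : Fc α 0 = 1 := by
  rw [Fc]
  have h : ∀ σ : Perm (Fin 0), numCycles σ = 0 := fun σ => by
    unfold numCycles
    rw [Subsingleton.elim σ 1, cycleType_one]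
    simp
  simp [h, Fintype.card_perm]

lemma Fc_succ (α : ℝ) (m : ℕ) : Fc α (m + 1) = (α + m) * Fc α m := by
  rw [Fc, ← Equiv.sum_comp (Equiv.Perm.decomposeFin (n := m)).symm
      (fun σ => α ^ numCycles σ), Fintype.sum_prod_type, Fin.sum_univ_succ]
  simp only [numCycles_decomposeFin_zero, numCycles_decomposeFin_succ, pow_succ]
  rw [← Finset.sum_mul, Finset.sum_const, card_univ, Fintype.card_fin, nsmul_eq_mul, ← Fc]
  ring

lemma Fc_pos {α : ℝ} (hα : 0 < α) (m : ℕ) : 0 < Fc α m := by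
  induction m with
  | zero => rw [Fc_zero]; norm_num
  | succ k ih =>
    rw [Fc_succ]
    have : (0:ℝ) < α + k := by positivity
    exact mul_pos this ih

lemma sum_filter_apply_conj (α : ℝ) {ι : Type*} [Fintype ι] [DecidableEq ι]
    (g : Perm ι) (q r : ι) :
    ∑ e ∈ univ.filter (fun e : Perm ι => e q = r), α ^ numCycles e
      = ∑ e ∈ univ.filter (fun e : Perm ι => e (g q) = g r), α ^ numCycles e := by
  refine Finset.sum_bij' (fun e _ => g * e * g⁻¹) (fun e _ => g⁻¹ * e * g)
    ?_ ?_ ?_ ?_ ?_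
  · intro e he
    simp only [mem_filter, mem_univ, true_and, mul_apply] at he ⊢
    rw [Equiv.Perm.coe_inv, Equiv.symm_apply_apply, he]
  · intro e he
    simp only [mem_filter, mem_univ, true_and, mul_apply] at he ⊢
    have := congrArg (g⁻¹ : Perm ι) he
    simpa using this
  · intro e _; simp [mul_assoc]
  · intro e _; simp [mul_assoc]
  · intro e _; rw [numCycles_conj]

lemma sum_filter_fix (α : ℝ) {m : ℕ} (q : Fin (m + 1)) :
    ∑ e ∈ univ.filter (fun e : Perm (Fin (m + 1)) => e q = q), α ^ numCycles e
      = α * Fc α m := by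
  have h := sum_filter_apply_conj α (swap 0 q) q q
  rw [swap_apply_right] at h
  rw [h, Finset.sum_filter,
    ← Equiv.sum_comp (Equiv.Perm.decomposeFin (n := m)).symm
      (fun e => if e 0 = 0 then α ^ numCycles e else 0),
    Fintype.sum_prod_type, Fin.sum_univ_succ]
  simp only [Equiv.Perm.decomposeFin_symm_apply_zero, if_pos rfl,
    Fin.succ_ne_zero, if_false, Finset.sum_const_zero, add_zero,
    numCycles_decomposeFin_zero, pow_succ]
  simp only [if_true]
  rw [← Finset.sum_mul, ← Fc]
  ring

end Sums

lemma sum_filter_move (α : ℝ) {m : ℕ} (hm : 1 ≤ m) {q r : Fin (m + 1)} (hr : r ≠ q) :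
    ∑ e ∈ univ.filter (fun e : Perm (Fin (m + 1)) => e q = r), α ^ numCycles e
      = Fc α m := by
  classical
  set U : Fin (m + 1) → ℝ :=
    fun r' => ∑ e ∈ univ.filter (fun e : Perm (Fin (m + 1)) => e q = r'), α ^ numCycles e
    with hU
  have htot : ∑ r' : Fin (m + 1), U r' = Fc α (m + 1) := by
    rw [Fc]
    exact Finset.sum_fiberwise univ (fun e => e q) (fun e => α ^ numCycles e)
  have hsplit : ∑ r' : Fin (m + 1), U r' = U q + ∑ r' ∈ univ.erase q, U r' :=
    (Finset.add_sum_erase univ U (mem_univ q)).symm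
  have hconst : ∀ r' ∈ univ.erase q, U r' = U r := by
    intro r' hr'
    have hr'q : r' ≠ q := (Finset.mem_erase.1 hr').1
    rcases eq_or_ne r' r with h | h
    · rw [h]
    · have hkey := sum_filter_apply_conj α (swap r r') q r
      have h1 : (swap r r') q = q := swap_apply_of_ne_of_ne (Ne.symm hr) (Ne.symm hr'q)
      have h2 : (swap r r') r = r' := swap_apply_left r r'
      rw [h1, h2] at hkey
      rw [hU]
      exact hkey.symm
  have herase : ∑ r' ∈ univ.erase q, U r' = m * U r := by
    rw [Finset.sum_congr rfl hconst, Finset.sum_const, Finset.card_erase_of_mem (mem_univ q),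
      card_univ, Fintype.card_fin, nsmul_eq_mul]
    push_cast
    ring
  have hqq : U q = α * Fc α m := sum_filter_fix α q
  have heq : (m : ℝ) * U r = (m : ℝ) * Fc α m := by
    have hFc := Fc_succ α m
    rw [hsplit, hqq, herase, hFc] at htot
    linarith
  have hm0 : (m : ℝ) ≠ 0 := by
    simp only [ne_eq, Nat.cast_eq_zero]
    omega
  exact mul_left_cancel₀ hm0 heq

theorem perA_ratio_constant_block {n : ℕ} (hn : 2 ≤ n) (α c : ℝ) (hα : 0 < α) (hc : c ≠ 0)
    (hαn : α + n - 1 ≠ 0)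
    (K : Matrix (Fin (n + 1)) (Fin (n + 1)) ℝ) (hsymm : K.IsSymm)
    (hconst : ∀ i j : Fin n, K i.succ j.succ = c) :
    perA α K / perA α (K.submatrix Fin.succ Fin.succ) =
      α * K 0 0 + α * ∑ i : Fin n, (K 0 i.succ) ^ 2 / (c * (α + n - 1)) +
        ∑ i : Fin n, ∑ j ∈ Finset.univ.erase i,
          K 0 i.succ * K 0 j.succ / (c * (α + n - 1)) := by
  classical
  obtain ⟨m, rfl⟩ : ∃ m, n = m + 1 := ⟨n - 1, by omega⟩
  have hm : 1 ≤ m := by omega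
  -- denominator
  have hden : perA α (K.submatrix Fin.succ Fin.succ) = c ^ (m + 1) * Fc α (m + 1) := by
    rw [perA]
    have h1 : ∀ σ : Perm (Fin (m + 1)),
        ∏ i, (K.submatrix Fin.succ Fin.succ) i (σ i) = c ^ (m + 1) := by
      intro σ
      calc ∏ i, (K.submatrix Fin.succ Fin.succ) i (σ i)
          = ∏ _i : Fin (m + 1), c :=
            Finset.prod_congr rfl fun i _ => by
              rw [Matrix.submatrix_apply]; exact hconst i (σ i)
        _ = c ^ (m + 1) := by rw [Finset.prod_const, card_univ, Fintype.card_fin]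
    calc ∑ σ : Perm (Fin (m + 1)), α ^ numCycles σ *
          ∏ i, (K.submatrix Fin.succ Fin.succ) i (σ i)
        = ∑ σ : Perm (Fin (m + 1)), α ^ numCycles σ * c ^ (m + 1) :=
          Finset.sum_congr rfl fun σ _ => by rw [h1 σ]
      _ = c ^ (m + 1) * Fc α (m + 1) := by rw [← Finset.sum_mul, ← Fc]; ring
  -- the two product computations
  have hprod0 : ∀ e : Perm (Fin (m + 1)),
      (∏ i : Fin (m + 2), K i ((Equiv.Perm.decomposeFin.symm (0, e)) i))
        = K 0 0 * c ^ (m + 1) := by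
    intro e
    rw [Fin.prod_univ_succ, Equiv.Perm.decomposeFin_symm_apply_zero]
    congr 1
    calc (∏ i : Fin (m + 1), K i.succ ((Equiv.Perm.decomposeFin.symm (0, e)) i.succ))
        = ∏ _i : Fin (m + 1), c := by
          apply Finset.prod_congr rfl
          intro i _
          rw [Equiv.Perm.decomposeFin_symm_apply_succ]
          simp only [swap_self, Equiv.refl_apply]
          exact hconst i (e i)
      _ = c ^ (m + 1) := by rw [Finset.prod_const, card_univ, Fintype.card_fin]
  have hprodS : ∀ (q : Fin (m + 1)) (e : Perm (Fin (m + 1))),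
      (∏ i : Fin (m + 2), K i ((Equiv.Perm.decomposeFin.symm (q.succ, e)) i))
        = K 0 q.succ * (K 0 (e⁻¹ q).succ * c ^ m) := by
    intro q e
    rw [Fin.prod_univ_succ, Equiv.Perm.decomposeFin_symm_apply_zero]
    congr 1
    have h1 : (∏ i : Fin (m + 1), K i.succ ((Equiv.Perm.decomposeFin.symm (q.succ, e)) i.succ))
        = ∏ i : Fin (m + 1), (if i = e⁻¹ q then K 0 i.succ else c) := by
      apply Finset.prod_congr rfl
      intro i _
      rw [Equiv.Perm.decomposeFin_symm_apply_succ]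
      by_cases h : i = e⁻¹ q
      · rw [if_pos h]
        have he : e i = q := by rw [h]; exact e.apply_symm_apply q
        rw [he, swap_apply_right]
        exact hsymm.apply 0 i.succ
      · rw [if_neg h]
        have he : e i ≠ q := fun h' => h (by rw [← h', Equiv.Perm.coe_inv, Equiv.symm_apply_apply])
        rw [swap_apply_of_ne_of_ne (Fin.succ_ne_zero (e i))
          (fun h' => he (Fin.succ_injective _ h'))]
        exact hconst i (e i)
    rw [h1, ← Finset.mul_prod_erase univ _ (Finset.mem_univ (e⁻¹ q)), if_pos rfl]
    congr 1
    calc (∏ i ∈ univ.erase (e⁻¹ q), (if i = e⁻¹ q then K 0 i.succ else c))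
        = ∏ _i ∈ univ.erase (e⁻¹ q), c :=
          Finset.prod_congr rfl fun i hi => if_neg (Finset.mem_erase.1 hi).1
      _ = c ^ m := by
          rw [Finset.prod_const, Finset.card_erase_of_mem (mem_univ _), card_univ,
            Fintype.card_fin, Nat.add_sub_cancel]
  -- the inner permanental sum
  have hinner : ∀ q : Fin (m + 1),
      (∑ e : Perm (Fin (m + 1)), α ^ numCycles e * K 0 (e⁻¹ q).succ)
        = α * Fc α m * K 0 q.succ + Fc α m * ∑ r ∈ univ.erase q, K 0 r.succ := by
    intro q
    have h1 : (∑ e : Perm (Fin (m + 1)), α ^ numCycles e * K 0 (e⁻¹ q).succ)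
        = ∑ e : Perm (Fin (m + 1)), α ^ numCycles e * K 0 (e q).succ := by
      calc (∑ e : Perm (Fin (m + 1)), α ^ numCycles e * K 0 (e⁻¹ q).succ)
          = ∑ e : Perm (Fin (m + 1)), α ^ numCycles e⁻¹ * K 0 (e⁻¹ q).succ :=
            Finset.sum_congr rfl fun e _ => by rw [numCycles_inv]
        _ = ∑ e : Perm (Fin (m + 1)), α ^ numCycles e * K 0 (e q).succ :=
            Equiv.sum_comp (Equiv.inv (Perm (Fin (m + 1))))
              (fun e => α ^ numCycles e * K 0 (e q).succ)
    have h2 : (∑ e : Perm (Fin (m + 1)), α ^ numCycles e * K 0 (e q).succ)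
        = ∑ r : Fin (m + 1), K 0 r.succ *
            ∑ e ∈ univ.filter (fun e : Perm (Fin (m + 1)) => e q = r), α ^ numCycles e := by
      rw [← Finset.sum_fiberwise univ (fun e : Perm (Fin (m + 1)) => e q)
        (fun e => α ^ numCycles e * K 0 (e q).succ)]
      apply Finset.sum_congr rfl
      intro r _
      rw [Finset.mul_sum]
      apply Finset.sum_congr rfl
      intro e he
      rw [(Finset.mem_filter.1 he).2]
      ring
    rw [h1, h2, ← Finset.add_sum_erase univ _ (mem_univ q), sum_filter_fix α q]
    have h3 : (∑ r ∈ univ.erase q, (K 0 r.succ *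
          ∑ e ∈ univ.filter (fun e : Perm (Fin (m + 1)) => e q = r), α ^ numCycles e))
        = ∑ r ∈ univ.erase q, K 0 r.succ * Fc α m := by
      apply Finset.sum_congr rfl
      intro r hr
      rw [sum_filter_move α hm (Finset.mem_erase.1 hr).1]
    rw [h3, ← Finset.sum_mul]
    ring
  -- numerator
  have hnum : perA α K =
      α * Fc α (m + 1) * (K 0 0 * c ^ (m + 1))
        + c ^ m * Fc α m * (α * (∑ q : Fin (m + 1), K 0 q.succ ^ 2)
            + ∑ q : Fin (m + 1), ∑ r ∈ univ.erase q, K 0 q.succ * K 0 r.succ) := by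
    rw [perA, ← Equiv.sum_comp (Equiv.Perm.decomposeFin (n := m + 1)).symm
      (fun σ => α ^ numCycles σ * ∏ i, K i (σ i)), Fintype.sum_prod_type, Fin.sum_univ_succ]
    congr 1
    · calc (∑ e : Perm (Fin (m + 1)),
            α ^ numCycles (Equiv.Perm.decomposeFin.symm ((0 : Fin (m + 2)), e))
              * ∏ i, K i ((Equiv.Perm.decomposeFin.symm ((0 : Fin (m + 2)), e)) i))
          = ∑ e : Perm (Fin (m + 1)), α ^ (numCycles e + 1) * (K 0 0 * c ^ (m + 1)) :=
            Finset.sum_congr rfl fun e _ => by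
              rw [numCycles_decomposeFin_zero, hprod0 e]
        _ = α * Fc α (m + 1) * (K 0 0 * c ^ (m + 1)) := by
            rw [← Finset.sum_mul, Fc]
            simp only [pow_succ]
            rw [← Finset.sum_mul]
            ring
    · calc (∑ q : Fin (m + 1), ∑ e : Perm (Fin (m + 1)),
            α ^ numCycles (Equiv.Perm.decomposeFin.symm (q.succ, e))
              * ∏ i, K i ((Equiv.Perm.decomposeFin.symm (q.succ, e)) i))
          = ∑ q : Fin (m + 1), ∑ e : Perm (Fin (m + 1)),
              (K 0 q.succ * c ^ m) * (α ^ numCycles e * K 0 (e⁻¹ q).succ) := by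
            apply Finset.sum_congr rfl; intro q _
            apply Finset.sum_congr rfl; intro e _
            rw [numCycles_decomposeFin_succ, hprodS q e]
            ring
        _ = ∑ q : Fin (m + 1), (K 0 q.succ * c ^ m)
              * (α * Fc α m * K 0 q.succ + Fc α m * ∑ r ∈ univ.erase q, K 0 r.succ) := by
            apply Finset.sum_congr rfl; intro q _
            rw [← Finset.mul_sum, hinner q]
        _ = ∑ q : Fin (m + 1), (c ^ m * Fc α m * (α * K 0 q.succ ^ 2)
              + c ^ m * Fc α m * ∑ r ∈ univ.erase q, K 0 q.succ * K 0 r.succ) := by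
            apply Finset.sum_congr rfl; intro q _
            have h4 : (∑ r ∈ univ.erase q, K 0 q.succ * K 0 r.succ)
                = K 0 q.succ * ∑ r ∈ univ.erase q, K 0 r.succ := (Finset.mul_sum _ _ _).symm
            rw [h4]
            ring
        _ = c ^ m * Fc α m * (α * (∑ q : Fin (m + 1), K 0 q.succ ^ 2)
              + ∑ q : Fin (m + 1), ∑ r ∈ univ.erase q, K 0 q.succ * K 0 r.succ) := by
            rw [Finset.sum_add_distrib, ← Finset.mul_sum, ← Finset.mul_sum, ← Finset.mul_sum]
            ring
  -- final division
  have hαm : α + (m : ℝ) ≠ 0 := by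
    intro h
    apply hαn
    push_cast
    linarith
  have hFm : Fc α m ≠ 0 := ne_of_gt (Fc_pos hα m)
  have hE : α + ((m : ℝ) + 1) - 1 = α + (m : ℝ) := by ring
  rw [hnum, hden, Fc_succ]
  push_cast
  rw [hE]
  have h5 : (∑ i : Fin (m + 1), K 0 i.succ ^ 2 / (c * (α + (m : ℝ))))
      = (∑ i : Fin (m + 1), K 0 i.succ ^ 2) / (c * (α + (m : ℝ))) :=
    (Finset.sum_div _ _ _).symm
  have h6 : (∑ i : Fin (m + 1), ∑ j ∈ univ.erase i, K 0 i.succ * K 0 j.succ / (c * (α + (m : ℝ))))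
      = (∑ i : Fin (m + 1), ∑ j ∈ univ.erase i, K 0 i.succ * K 0 j.succ) / (c * (α + (m : ℝ))) := by
    rw [Finset.sum_div]
    exact Finset.sum_congr rfl fun i _ => (Finset.sum_div _ _ _).symm
  rw [h5, h6]
  field_simp
  ring
end
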